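/- arXiv:2506.19135 — 5 statements merged into one kernel-verified Lean document; each statement's English description precedes it below -/
import Mathlib

section
/- Let $(A_n)$ be a sequence of connected subsets of a metric space $X$, all contained in a compact set $K$, and suppose there exists a convergent sequence $(x_n)$ with $x_n \in A_n$ for every $n$. Then the superior limit $A = \bigcap_k \overline{\bigcup_{n\geq k} A_n}$ is connected. -/
open Metric Filter Topology Set

/-- The superior limit of connected subsets of a compact set, admitting a convergent
sequence of points `x_n ∈ A n`, is connected. -/
theorem stmt_2 {X : Type*} [MetricSpace X] (A : ℕ → Set X) (K : Set X)
    (hK : IsCompact K) (hsub : ∀ n, A n ⊆ K) (hconn : ∀ n, IsConnected (A n))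
    (x : ℕ → X) (hx : ∀ n, x n ∈ A n) (x₀ : X) (hlim : Tendsto x atTop (𝓝 x₀)) :
    IsConnected (⋂ k : ℕ, closure (⋃ n ∈ Set.Ici k, A n)) := by
  set L : Set X := ⋂ k : ℕ, closure (⋃ n ∈ Set.Ici k, A n) with hL
  have hLclosed : IsClosed L := isClosed_iInter fun k => isClosed_closure
  have hLK : L ⊆ K := by
    intro y hy
    have h0 : y ∈ closure (⋃ n ∈ Set.Ici 0, A n) := mem_iInter.1 hy 0
    have : closure (⋃ n ∈ Set.Ici 0, A n) ⊆ K := by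
      rw [← hK.isClosed.closure_eq]
      exact closure_mono (iUnion₂_subset fun n _ => hsub n)
    exact this h0
  have hLcomp : IsCompact L := hK.of_isClosed_subset hLclosed hLK
  have hx₀ : x₀ ∈ L := by
    refine mem_iInter.2 fun k => ?_
    refine mem_closure_of_tendsto hlim ?_
    filter_upwards [eventually_ge_atTop k] with n hn
    exact mem_biUnion hn (hx n)
  -- key lemma: if L splits into disjoint closed u, v with x₀ ∈ u, then L ⊆ u
  have key : ∀ u v : Set X, IsClosed u → IsClosed v → L ⊆ u ∪ v → Disjoint u v →
      x₀ ∈ u → L ⊆ u := by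
    intro u v hu hv hcover hdisj hx₀u
    by_contra hnot
    obtain ⟨d, hdL, hdu⟩ := not_subset.1 hnot
    have hdv : d ∈ v := (hcover hdL).resolve_left hdu
    set C : Set X := L ∩ u with hC
    set D : Set X := L ∩ v with hD
    have hCcomp : IsCompact C := hLcomp.of_isClosed_subset (hLclosed.inter hu) inter_subset_left
    have hdisjCv : Disjoint C v := hdisj.mono_left inter_subset_right
    obtain ⟨δ, hδ, hUV⟩ := hdisjCv.exists_thickenings hCcomp hv
    set U : Set X := thickening δ C with hUdef
    set V : Set X := thickening δ v with hVdef
    have hUopen : IsOpen U := isOpen_thickening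
    have hVopen : IsOpen V := isOpen_thickening
    -- eventually A n ⊆ U ∪ V
    have hev : ∃ N, ∀ n ≥ N, A n ⊆ U ∪ V := by
      by_contra hno
      push_neg at hno
      -- build a sequence of bad points
      have hch : ∀ N : ℕ, ∃ n ≥ N, ∃ y ∈ A n, y ∉ U ∪ V := by
        intro N
        obtain ⟨n, hn, hAn⟩ := hno N
        obtain ⟨y, hy, hy'⟩ := not_subset.1 hAn
        exact ⟨n, hn, y, hy, hy'⟩
      choose m hm y hyA hyout using hch
      have hyK : ∀ N, y N ∈ K := fun N => hsub _ (hyA N)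
      obtain ⟨a, haK, φ, hφ, hconv⟩ := hK.tendsto_subseq hyK
      have haL : a ∈ L := by
        refine mem_iInter.2 fun k => ?_
        refine mem_closure_of_tendsto hconv ?_
        filter_upwards [eventually_ge_atTop k] with N hN
        have : m (φ N) ≥ k := le_trans (le_trans hN (hφ.id_le N)) (hm (φ N))
        exact mem_biUnion this (hyA (φ N))
      have haout : a ∉ U ∪ V := by
        have hclosed : IsClosed (U ∪ V)ᶜ := (hUopen.union hVopen).isClosed_compl
        exact hclosed.mem_of_tendsto hconv (Eventually.of_forall fun N => hyout (φ N))
      apply haout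
      rcases hcover haL with h | h
      · exact Or.inl (self_subset_thickening hδ C ⟨haL, h⟩)
      · exact Or.inr (self_subset_thickening hδ v h)
    obtain ⟨N₁, hN₁⟩ := hev
    -- eventually x n ∈ U
    have hx₀U : x₀ ∈ U := self_subset_thickening hδ C ⟨hx₀, hx₀u⟩
    have hxU : ∀ᶠ n in atTop, x n ∈ U := hlim (hUopen.mem_nhds hx₀U)
    obtain ⟨N₂, hN₂⟩ := eventually_atTop.1 hxU
    set N := max N₁ N₂ with hN
    have hAU : ∀ n ≥ N, A n ⊆ U := by
      intro n hn
      rcases (hconn n).isPreconnected.subset_or_subset hUopen hVopen hUV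
          (hN₁ n (le_trans (le_max_left _ _) hn)) with h | h
      · exact h
      · exfalso
        exact hUV.ne_of_mem (hN₂ n (le_trans (le_max_right _ _) hn)) (h (hx n)) rfl
    have hdU : d ∈ closure U := by
      have hdc : d ∈ closure (⋃ n ∈ Set.Ici N, A n) := mem_iInter.1 hdL N
      refine closure_mono ?_ hdc
      exact iUnion₂_subset fun n hn => hAU n hn
    have hdV : d ∈ V := self_subset_thickening hδ v hdv
    have : d ∉ closure U := by
      rw [_root_.mem_closure_iff]
      push_neg
      refine ⟨V, hVopen, hdV, ?_⟩
      rw [inter_comm]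
      exact hUV.inter_eq
    exact this hdU
  constructor
  · exact ⟨x₀, hx₀⟩
  · rw [isPreconnected_iff_subset_of_fully_disjoint_closed hLclosed]
    intro u v hu hv hcover hdisj
    rcases hcover hx₀ with h | h
    · exact Or.inl (key u v hu hv hcover hdisj h)
    · exact Or.inr (key v u hv hu (by rwa [union_comm]) hdisj.symm h)
end

section
/- Let $(\varphi_t)$ be a flow on a metric space $X$ and $(A_n)$ a sequence of subsets each of which is recurrent (every point of $A_n$ is a recurrent point of the flow) and invariant. Then every point of the superior limit $A = \bigcap_k \overline{\bigcup_{n\geq k} A_n}$ is chain-recurrent: for every $\varepsilon, T > 0$ and every $x \in A$ there is an $(\varepsilon,T)$-chain from $x$ to itself. -/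
open Metric Filter Topology Set

/-- A point `x` is recurrent for the flow `φ` if it returns arbitrarily close to itself
at arbitrarily large times. -/
def RecurrentPt {X : Type*} [MetricSpace X] (φ : Flow ℝ X) (x : X) : Prop :=
  ∀ ε > (0:ℝ), ∀ T > (0:ℝ), ∃ t ≥ T, dist x (φ t x) < ε

/-- If every `A n` is an invariant set consisting of recurrent points, then every point of
the superior limit is chain-recurrent: for all `ε, T > 0` there is an `(ε,T)`-chain from the
point to itself. -/
theorem stmt_5 {X : Type*} [MetricSpace X] (φ : Flow ℝ X) (A : ℕ → Set X)
    (hinv : ∀ n, ∀ t : ℝ, φ t '' A n ⊆ A n)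
    (hrec : ∀ n, ∀ x ∈ A n, RecurrentPt φ x) :
    ∀ x ∈ ⋂ k : ℕ, closure (⋃ n ∈ Set.Ici k, A n), ∀ ε > (0:ℝ), ∀ T > (0:ℝ),
      ∃ (m : ℕ) (c : ℕ → X) (ts : ℕ → ℝ), 1 ≤ m ∧ c 0 = x ∧ c m = x ∧
        ∀ i < m, T ≤ ts i ∧ dist (φ (ts i) (c i)) (c (i+1)) < ε := by
  intro x hx ε hε T hT
  have hc : Continuous fun z : X => φ T z := φ.cont'.comp (Continuous.prodMk_right T)
  obtain ⟨δ, hδ, hδ2⟩ := Metric.continuous_iff.1 hc x ε hε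
  have hx0 : x ∈ closure (⋃ n ∈ Set.Ici (0:ℕ), A n) := Set.mem_iInter.1 hx 0
  obtain ⟨y, hy, hdy⟩ := Metric.mem_closure_iff.1 hx0 (min δ (ε/2))
    (lt_min hδ (by positivity))
  obtain ⟨n, -, hyn⟩ := Set.mem_iUnion₂.1 hy
  obtain ⟨s, hs, hsy⟩ := hrec n y hyn (ε/2) (by positivity) (2*T) (by linarith)
  refine ⟨2, fun i => if i = 0 then x else if i = 1 then φ T y else x,
    fun i => if i = 0 then T else s - T, one_le_two, rfl, rfl, ?_⟩
  intro i hi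
  interval_cases i
  · simp only [if_pos rfl, Nat.one_ne_zero, if_neg, if_pos rfl]
    refine ⟨le_refl T, ?_⟩
    rw [dist_comm]
    exact hδ2 y (by rw [dist_comm]; exact hdy.trans_le (min_le_left _ _))
  · simp only [Nat.one_ne_zero, if_neg, if_pos rfl, if_false]
    refine ⟨by linarith, ?_⟩
    have : φ (s - T) (φ T y) = φ s y := by
      rw [← φ.map_add]; ring_nf
    simp only [if_pos trivial] at this ⊢
    rw [this]
    calc dist (φ s y) x ≤ dist (φ s y) y + dist y x := dist_triangle _ _ _
      _ < ε/2 + ε/2 := by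
          have h1 : dist (φ s y) y < ε/2 := by rw [dist_comm]; exact hsy
          have h2 : dist y x < ε/2 := by
            rw [dist_comm]; exact hdy.trans_le (min_le_right _ _)
          linarith
      _ = ε := by ring
end

section
/- For the boundary McGehee system $q' = y - \nu q$, $y' = -\nabla U_l(q) - \frac{l}{2}\nu y$ on $S^{n-1} \times \mathbb{R}^n$ with $\nu = \langle q, y \rangle$ and $U_l$ homogeneous of degree $l$, one has along solutions $\nu' = (1 + l/2)\|y_{tg}\|^2 - l\,\tilde H$, where $y_{tg} = y - \nu q$ is the component of $y$ tangent to the sphere and $\tilde H(q,y) = \|y\|^2/2 + U_l(q)$. Consequently, on the region $\{\tilde H \leq 0\}$ with $l \geq 2$, the function $\nu$ is nondecreasing along orbits. -/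
open scoped RealInnerProductSpace

/-- Along solutions of the boundary McGehee system `q' = y - ν q`,
`y' = -∇U_l(q) - (l/2) ν y` with `ν = ⟨q,y⟩` and `U_l` homogeneous of degree `l`,
one has `ν' = (1 + l/2)‖y_tg‖² - l H̃` where `y_tg = y - ν q` and `H̃ = ‖y‖²/2 + U_l(q)`.
Consequently, if `l ≥ 2` and `H̃ ≤ 0` along the orbit, `ν` is nondecreasing. -/
theorem stmt_16 {n l : ℕ} (hl : 2 ≤ l)
    (U : EuclideanSpace ℝ (Fin n) → ℝ) (hU : ContDiff ℝ (⊤ : ℕ∞) U)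
    (hhom : ∀ (c : ℝ) (x : EuclideanSpace ℝ (Fin n)), U (c • x) = c ^ l * U x)
    (q y : ℝ → EuclideanSpace ℝ (Fin n))
    (hq1 : ∀ τ, ‖q τ‖ = 1)
    (hq' : ∀ τ, HasDerivAt q (y τ - ⟪q τ, y τ⟫ • q τ) τ)
    (hy' : ∀ τ, HasDerivAt y
      (-(gradient U (q τ)) - (((l : ℝ) / 2) * ⟪q τ, y τ⟫) • y τ) τ) :
    (∀ τ : ℝ, HasDerivAt (fun σ => ⟪q σ, y σ⟫)
      ((1 + (l : ℝ) / 2) * ‖y τ - ⟪q τ, y τ⟫ • q τ‖ ^ 2 -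
        (l : ℝ) * (‖y τ‖ ^ 2 / 2 + U (q τ))) τ) ∧
    ((∀ τ : ℝ, ‖y τ‖ ^ 2 / 2 + U (q τ) ≤ 0) →
      Monotone fun σ => ⟪q σ, y σ⟫) := by
  have hUd : ∀ x, DifferentiableAt ℝ U x := fun x => (hU.differentiable (by simp)) x
  -- Euler's identity
  have euler : ∀ x : EuclideanSpace ℝ (Fin n), ⟪gradient U x, x⟫ = (l : ℝ) * U x := by
    intro x
    have hsm : HasDerivAt (fun t : ℝ => t • x) x 1 := by
      simpa using (hasDerivAt_id (1 : ℝ)).smul_const x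
    have h1 : HasDerivAt (fun t : ℝ => U (t • x)) (fderiv ℝ U x x) 1 := by
      have hF : HasFDerivAt U (fderiv ℝ U x) ((1 : ℝ) • x) := by
        rw [one_smul]; exact (hUd x).hasFDerivAt
      exact hF.comp_hasDerivAt 1 hsm
    have h2 : HasDerivAt (fun t : ℝ => U (t • x)) ((l : ℝ) * U x) 1 := by
      have he : (fun t : ℝ => U (t • x)) = fun t => t ^ l * U x :=
        funext fun t => hhom t x
      rw [he]
      simpa using (hasDerivAt_pow l (1 : ℝ)).mul_const (U x)
    have hu : fderiv ℝ U x x = (l : ℝ) * U x := h1.unique h2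
    rw [gradient, InnerProductSpace.toDual_symm_apply, hu]
  have key : ∀ τ : ℝ, HasDerivAt (fun σ => ⟪q σ, y σ⟫)
      ((1 + (l : ℝ) / 2) * ‖y τ - ⟪q τ, y τ⟫ • q τ‖ ^ 2 -
        (l : ℝ) * (‖y τ‖ ^ 2 / 2 + U (q τ))) τ := by
    intro τ
    set ν := ⟪q τ, y τ⟫ with hν
    have hd := (hq' τ).inner ℝ (hy' τ)
    have hnorm : ‖y τ - ν • q τ‖ ^ 2 = ‖y τ‖ ^ 2 - ν ^ 2 := by
      rw [norm_sub_sq_real, real_inner_smul_right, norm_smul]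
      rw [real_inner_comm, ← hν, hq1 τ]
      have : |ν| ^ 2 = ν ^ 2 := sq_abs ν
      simp [Real.norm_eq_abs, this]
      ring
    have hval : ⟪q τ, -(gradient U (q τ)) - (((l : ℝ) / 2) * ν) • y τ⟫ +
        ⟪y τ - ν • q τ, y τ⟫ =
        (1 + (l : ℝ) / 2) * ‖y τ - ν • q τ‖ ^ 2 -
          (l : ℝ) * (‖y τ‖ ^ 2 / 2 + U (q τ)) := by
      have hg : ⟪q τ, gradient U (q τ)⟫ = (l : ℝ) * U (q τ) := by
        rw [real_inner_comm]; exact euler _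
      rw [inner_sub_right, inner_neg_right, real_inner_smul_right, inner_sub_left,
        real_inner_smul_left, hg, real_inner_self_eq_norm_sq, ← hν, hnorm]
      ring
    rw [← hval]
    exact hd
  refine ⟨key, fun hH => ?_⟩
  have hdiff : Differentiable ℝ (fun σ => ⟪q σ, y σ⟫) := fun τ => (key τ).differentiableAt
  apply monotone_of_deriv_nonneg hdiff
  intro τ
  rw [(key τ).deriv]
  have h1 : (0 : ℝ) ≤ (1 + (l : ℝ) / 2) * ‖y τ - ⟪q τ, y τ⟫ • q τ‖ ^ 2 := by positivity
  have h2 : (l : ℝ) * (‖y τ‖ ^ 2 / 2 + U (q τ)) ≤ 0 :=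
    mul_nonpos_of_nonneg_of_nonpos (by positivity) (hH τ)
  linarith
end

section
/- For the boundary McGehee system $q' = y - \nu q$, $y' = -\nabla U_l(q) - \frac{l}{2}\nu y$ on $S^{n-1} \times \mathbb{R}^n$ with $\nu = \langle q,y\rangle$, a point $(q,y)$ with $\tilde H(q,y) = 0$ is an equilibrium if and only if $y = \nu q$ and $q$ is a critical point of $U_l$ restricted to the unit sphere with Lagrange multiplier $-l\nu^2/2$, i.e., $\nabla U_l(q) = -\frac{l\nu^2}{2} q$. Equivalently, the equilibria with $\tilde H = 0$ are exactly the points $(q, \pm(-2U_l(q))^{1/2} q)$ for $q$ a critical point of $U_l|_{S^{n-1}}$ with $U_l(q) \leq 0$. -/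
open scoped RealInnerProductSpace

lemma euler {n l : ℕ} (U : EuclideanSpace ℝ (Fin n) → ℝ) (hU : ContDiff ℝ (⊤ : ℕ∞) U)
    (hhom : ∀ (c : ℝ) (x : EuclideanSpace ℝ (Fin n)), U (c • x) = c ^ l * U x)
    (q : EuclideanSpace ℝ (Fin n)) : ⟪gradient U q, q⟫ = l * U q := by
  have hd : DifferentiableAt ℝ U q := (hU.differentiable (by simp)) q
  have h1 : HasDerivAt (fun t : ℝ => t • q) q 1 := by
    simpa using (hasDerivAt_id (1:ℝ)).smul_const q
  have hd' : HasFDerivAt U (fderiv ℝ U q) ((1:ℝ) • q) := by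
    rw [one_smul]; exact hd.hasFDerivAt
  have h2 : HasDerivAt (fun t : ℝ => U (t • q)) (fderiv ℝ U q q) 1 :=
    hd'.comp_hasDerivAt 1 h1
  have h3 : (fun t : ℝ => U (t • q)) = fun t => t ^ l * U q := funext fun t => hhom t q
  have h4 : HasDerivAt (fun t : ℝ => t ^ l * U q) ((l * 1 ^ (l-1)) * U q) 1 :=
    (hasDerivAt_pow l 1).mul_const (U q)
  rw [h3] at h2
  have h5 : fderiv ℝ U q q = l * U q := by
    have := h2.unique h4; simpa using this
  rw [← h5]
  rw [gradient]
  exact InnerProductSpace.toDual_symm_apply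

/-- Characterization of the equilibria of the boundary McGehee system on the zero level of
the rescaled energy `H̃(q,y) = ‖y‖²/2 + U_l(q)`: a point `(q,y)` with `H̃ = 0` is an
equilibrium iff `y = ν q` with `ν = ⟨q,y⟩` and `q` is a critical point of `U_l` restricted
to the unit sphere with Lagrange multiplier `-lν²/2`; equivalently iff `U_l(q) ≤ 0`,
`y = ±(-2U_l(q))^{1/2} q` and `q` is a critical point of the restriction. -/
theorem stmt_17 {n l : ℕ} (hl : 2 ≤ l)
    (U : EuclideanSpace ℝ (Fin n) → ℝ) (hU : ContDiff ℝ (⊤ : ℕ∞) U)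
    (hhom : ∀ (c : ℝ) (x : EuclideanSpace ℝ (Fin n)), U (c • x) = c ^ l * U x)
    (q y : EuclideanSpace ℝ (Fin n)) (hq : ‖q‖ = 1)
    (hH : ‖y‖ ^ 2 / 2 + U q = 0) :
    ((y - ⟪q, y⟫ • q = 0 ∧
        -(gradient U q) - (((l : ℝ) / 2) * ⟪q, y⟫) • y = 0) ↔
      (y = ⟪q, y⟫ • q ∧ gradient U q = (-((l : ℝ) * ⟪q, y⟫ ^ 2) / 2) • q)) ∧
    ((y - ⟪q, y⟫ • q = 0 ∧
        -(gradient U q) - (((l : ℝ) / 2) * ⟪q, y⟫) • y = 0) ↔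
      (U q ≤ 0 ∧
        (y = Real.sqrt (-2 * U q) • q ∨ y = -(Real.sqrt (-2 * U q)) • q) ∧
        ∃ μ : ℝ, gradient U q = μ • q)) := by
  set ν : ℝ := ⟪q, y⟫ with hν
  have hqq : ⟪q, q⟫ = 1 := by rw [real_inner_self_eq_norm_sq, hq]; norm_num
  have heuler : ⟪gradient U q, q⟫ = l * U q := euler U hU hhom q
  have iff1 : (y - ν • q = 0 ∧
        -(gradient U q) - (((l : ℝ) / 2) * ν) • y = 0) ↔
      (y = ν • q ∧ gradient U q = (-((l : ℝ) * ν ^ 2) / 2) • q) := by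
    constructor
    · rintro ⟨h1, h2⟩
      have hy : y = ν • q := by rwa [sub_eq_zero] at h1
      refine ⟨hy, ?_⟩
      have h2' : -(gradient U q) = (((l : ℝ) / 2) * ν) • y := sub_eq_zero.mp h2
      have : gradient U q = -((((l : ℝ) / 2) * ν) • y) := by rw [← h2', neg_neg]
      rw [this, hy, smul_smul, ← neg_smul]
      congr 1; ring
    · rintro ⟨hy, hg⟩
      constructor
      · rw [sub_eq_zero]; exact hy
      · rw [hg, hy, smul_smul, ← neg_smul, ← sub_smul]
        convert zero_smul ℝ q using 2
        ring
  refine ⟨iff1, iff1.trans ?_⟩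
  constructor
  · rintro ⟨hy, hg⟩
    have hny : ‖y‖ ^ 2 = ν ^ 2 := by
      rw [hy, norm_smul, hq]; simp [sq_abs, mul_pow]
    have hUq : U q = -(ν ^ 2) / 2 := by linarith [hH, hny.symm, hny]
    have hUle : U q ≤ 0 := by nlinarith [sq_nonneg ν]
    have hsq : -2 * U q = ν ^ 2 := by rw [hUq]; ring
    refine ⟨hUle, ?_, ⟨-((l : ℝ) * ν ^ 2) / 2, hg⟩⟩
    rcases le_or_gt 0 ν with h | h
    · left; rw [hy, hsq, Real.sqrt_sq h]
    · right; rw [hy, hsq]; congr 1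
      rw [Real.sqrt_sq_eq_abs, abs_of_neg h, neg_neg]
  · rintro ⟨hUle, hy, μ, hg⟩
    have hs2 : Real.sqrt (-2 * U q) ^ 2 = -2 * U q :=
      Real.sq_sqrt (by linarith)
    have hkey : y = ν • q ∧ ν ^ 2 = -2 * U q := by
      rcases hy with h | h
      · have hs : ν = Real.sqrt (-2 * U q) := by
          rw [hν, h, real_inner_smul_right, hqq, mul_one]
        exact ⟨by rw [h, hs], by rw [hs, hs2]⟩
      · have hs : ν = -Real.sqrt (-2 * U q) := by
          rw [hν, h, real_inner_smul_right, hqq, mul_one]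
        exact ⟨by rw [h, hs], by rw [hs, neg_sq, hs2]⟩
    obtain ⟨hyν, hν2⟩ := hkey
    have hμ : μ = l * U q := by
      have : ⟪gradient U q, q⟫ = μ := by
        rw [hg, real_inner_smul_left, hqq, mul_one]
      rw [← this, heuler]
    refine ⟨hyν, ?_⟩
    rw [hg, hμ]
    congr 1
    rw [hν2]; ring
end

section
/- Let $q$ be a critical point of $U_l$ restricted to the unit sphere with $U_l(q) < 0$, and let $\nu_\pm = \pm(-2 U_l(q))^{1/2}$. Then the solution of the scalar ODE $\mathscr{Y}' = -l(\mathscr{Y}^2/2 + U_l(q))$ with $\mathscr{Y}(0) \in (\nu_-, \nu_+)$ satisfies $\mathscr{Y}(\tau) \to \nu_\pm$ as $\tau \to \pm\infty$, so the curve $\tau \mapsto (q, \mathscr{Y}(\tau) q)$ is a heteroclinic orbit of the boundary McGehee system $q' = y - \nu q$, $y' = -\nabla U_l(q) - \frac{l}{2}\nu y$ connecting the equilibria $(q, \nu_- q)$ and $(q, \nu_+ q)$. -/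
open scoped RealInnerProductSpace

private lemma pos_of_linear_ode {g c : ℝ → ℝ} (hc : Continuous c)
    (hg : ∀ τ, HasDerivAt g (c τ * g τ) τ) (h0 : 0 < g 0) : ∀ τ, 0 < g τ := by
  set C : ℝ → ℝ := fun τ => ∫ s in (0:ℝ)..τ, c s with hCdef
  have hC : ∀ τ, HasDerivAt C (c τ) τ := fun τ =>
    intervalIntegral.integral_hasDerivAt_right (hc.intervalIntegrable _ _)
      (hc.stronglyMeasurableAtFilter _ _) hc.continuousAt
  set h : ℝ → ℝ := fun τ => g τ * Real.exp (-C τ) with hhdef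
  have hh : ∀ τ, HasDerivAt h 0 τ := by
    intro τ
    have := (hg τ).mul ((hC τ).neg.exp)
    exact this.congr_deriv (by ring)
  have hconst : ∀ τ, h τ = h 0 :=
    fun τ => is_const_of_deriv_eq_zero (fun σ => (hh σ).differentiableAt)
      (fun σ => (hh σ).deriv) τ 0
  intro τ
  have h0' : 0 < h 0 := by
    have : C 0 = 0 := intervalIntegral.integral_same
    simp [hhdef, this, h0]
  have : g τ = h τ * Real.exp (C τ) := by
    simp only [hhdef]
    rw [mul_assoc, ← Real.exp_add, neg_add_cancel, Real.exp_zero, mul_one]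
  rw [this, hconst τ]
  positivity

private lemma tendsto_ode {a ν : ℝ} (ha : 0 < a) (hν : 0 < ν) {Y : ℝ → ℝ}
    (hY : ∀ τ, HasDerivAt Y (a * (ν ^ 2 - Y τ ^ 2)) τ)
    (h0 : Y 0 ∈ Set.Ioo (-ν) ν) :
    Filter.Tendsto Y Filter.atTop (nhds ν) := by
  have hYc : Continuous Y :=
    continuous_iff_continuousAt.mpr fun τ => (hY τ).continuousAt
  -- upper bound
  have hub : ∀ τ, Y τ < ν := by
    have hcont : Continuous (fun τ => -(a * (ν + Y τ))) := by continuity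
    have := pos_of_linear_ode hcont (g := fun τ => ν - Y τ)
      (fun τ => by
        have := (hY τ).const_sub ν
        exact this.congr_deriv (by ring)) (by simpa using h0.2)
    intro τ; have h := this τ; linarith
  have hlb : ∀ τ, -ν < Y τ := by
    have hcont : Continuous (fun τ => a * (ν - Y τ)) := by continuity
    have := pos_of_linear_ode hcont (g := fun τ => Y τ + ν)
      (fun τ => by
        have := (hY τ).add_const ν
        exact this.congr_deriv (by ring)) (by linarith [h0.1])
    intro τ; have h := this τ; linarith
  have hsq : ∀ τ, Y τ ^ 2 < ν ^ 2 := fun τ => sq_lt_sq' (hlb τ) (hub τ)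
  have hmono : Monotone Y :=
    monotone_of_deriv_nonneg (fun τ => (hY τ).differentiableAt)
      (fun τ => by rw [(hY τ).deriv]; nlinarith [hsq τ])
  have hbdd : BddAbove (Set.range Y) := ⟨ν, by rintro x ⟨τ, rfl⟩; exact (hub τ).le⟩
  have htend : Filter.Tendsto Y Filter.atTop (nhds (⨆ τ, Y τ)) :=
    tendsto_atTop_ciSup hmono hbdd
  set L := ⨆ τ, Y τ with hLdef
  have hLle : L ≤ ν := ciSup_le fun τ => (hub τ).le
  have hY0L : Y 0 ≤ L := le_ciSup hbdd 0
  have hLτ : ∀ τ, Y τ ≤ L := fun τ => le_ciSup hbdd τ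
  suffices hLν : L = ν by rwa [hLν] at htend
  by_contra hne
  have hLlt : L < ν := lt_of_le_of_ne hLle hne
  set b : ℝ := max |Y 0| |L| with hbdef
  have hb : b < ν := max_lt (abs_lt.mpr ⟨h0.1, h0.2⟩)
    (abs_lt.mpr ⟨by linarith [h0.1], hLlt⟩)
  have hb0 : 0 ≤ b := le_trans (abs_nonneg _) (le_max_left _ _)
  set δ : ℝ := a * (ν ^ 2 - b ^ 2) with hδdef
  have hδ : 0 < δ := by
    have : b ^ 2 < ν ^ 2 := by nlinarith
    have := mul_pos ha (sub_pos.mpr this)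
    simpa [hδdef] using this
  have hclaim : ∀ τ, 0 ≤ τ → δ ≤ a * (ν ^ 2 - Y τ ^ 2) := by
    intro τ hτ
    have h1 : Y τ ≤ b := le_trans (hLτ τ) (le_trans (le_abs_self _) (le_max_right _ _))
    have h2 : -b ≤ Y τ := by
      have := hmono hτ
      have := neg_abs_le (Y 0)
      have := le_max_left |Y 0| |L|
      linarith
    have : Y τ ^ 2 ≤ b ^ 2 := sq_le_sq' h2 h1
    have := mul_le_mul_of_nonneg_left (by linarith : ν ^ 2 - b ^ 2 ≤ ν ^ 2 - Y τ ^ 2) ha.le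
    simpa [hδdef] using this
  set W : ℝ → ℝ := fun τ => Y τ - δ * τ with hWdef
  have hW : ∀ τ, HasDerivAt W (a * (ν ^ 2 - Y τ ^ 2) - δ) τ := by
    intro τ
    have h1 : HasDerivAt (fun τ : ℝ => δ * τ) δ τ := by
      simpa using (hasDerivAt_id τ).const_mul δ
    exact (hY τ).sub h1
  have hWmono : MonotoneOn W (Set.Ici (0:ℝ)) := by
    apply monotoneOn_of_deriv_nonneg (convex_Ici 0)
    · exact (hYc.sub (continuous_const.mul continuous_id)).continuousOn
    · exact fun τ _ => (hW τ).differentiableAt.differentiableWithinAt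
    · intro τ hτ
      rw [interior_Ici] at hτ
      rw [(hW τ).deriv]
      linarith [hclaim τ (le_of_lt hτ)]
  set T : ℝ := (ν - Y 0) / δ + 1 with hTdef
  have hT0 : 0 ≤ T := by
    have h1 : 0 < (ν - Y 0) / δ := div_pos (by linarith [h0.2]) hδ
    rw [hTdef]; linarith
  have hle : W 0 ≤ W T := hWmono Set.self_mem_Ici hT0 hT0
  have hδT : δ * T = (ν - Y 0) + δ := by
    rw [hTdef]; field_simp
  have : ν < Y T := by
    simp only [hWdef, mul_zero, sub_zero] at hle
    linarith
  exact absurd this (not_lt.mpr (hub T).le)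

/-- For a critical point `q` of `U_l` on the unit sphere with `U_l(q) < 0`, the scalar ODE
`𝒴' = -l(𝒴²/2 + U_l(q))` with initial condition strictly between `ν₋` and `ν₊`, where
`ν_± = ±(-2U_l(q))^{1/2}`, yields a heteroclinic orbit `τ ↦ (q, 𝒴(τ) q)` of the boundary
McGehee system connecting the equilibria `(q, ν₋ q)` and `(q, ν₊ q)`. -/
theorem stmt_18 {n l : ℕ} (hl : 2 ≤ l)
    (U : EuclideanSpace ℝ (Fin n) → ℝ) (hU : ContDiff ℝ (⊤ : ℕ∞) U)
    (hhom : ∀ (c : ℝ) (x : EuclideanSpace ℝ (Fin n)), U (c • x) = c ^ l * U x)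
    (q : EuclideanSpace ℝ (Fin n)) (hq : ‖q‖ = 1)
    (hcrit : gradient U q = ((l : ℝ) * U q) • q) (hneg : U q < 0)
    (Y : ℝ → ℝ)
    (hY : ∀ τ, HasDerivAt Y (-(l : ℝ) * (Y τ ^ 2 / 2 + U q)) τ)
    (hY0 : Y 0 ∈ Set.Ioo (-(Real.sqrt (-2 * U q))) (Real.sqrt (-2 * U q))) :
    Filter.Tendsto Y Filter.atTop (nhds (Real.sqrt (-2 * U q))) ∧
    Filter.Tendsto Y Filter.atBot (nhds (-(Real.sqrt (-2 * U q)))) ∧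
    (∀ τ : ℝ, Y τ • q - ⟪q, Y τ • q⟫ • q = 0) ∧
    (∀ τ : ℝ, HasDerivAt (fun σ => Y σ • q)
      (-(gradient U q) - (((l : ℝ) / 2) * ⟪q, Y τ • q⟫) • (Y τ • q)) τ) := by
  set ν : ℝ := Real.sqrt (-2 * U q) with hνdef
  have hν : 0 < ν := Real.sqrt_pos.mpr (by linarith)
  have hν2 : ν ^ 2 = -2 * U q := Real.sq_sqrt (by linarith)
  have hl' : (2:ℝ) ≤ (l : ℝ) := by exact_mod_cast hl
  set a : ℝ := (l : ℝ) / 2 with hadef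
  have ha : 0 < a := by positivity
  have hY' : ∀ τ, HasDerivAt Y (a * (ν ^ 2 - Y τ ^ 2)) τ := by
    intro τ
    convert hY τ using 1
    rw [hν2]; ring
  have htop : Filter.Tendsto Y Filter.atTop (nhds ν) := tendsto_ode ha hν hY' hY0
  have hbot : Filter.Tendsto Y Filter.atBot (nhds (-ν)) := by
    set Z : ℝ → ℝ := fun τ => -Y (-τ) with hZdef
    have hZ : ∀ τ, HasDerivAt Z (a * (ν ^ 2 - Z τ ^ 2)) τ := by
      intro τ
      have := ((hY' (-τ)).comp τ (hasDerivAt_neg τ)).neg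
      exact this.congr_deriv (by simp only [hZdef]; ring)
    have hZ0 : Z 0 ∈ Set.Ioo (-ν) ν := by
      simp only [hZdef, neg_zero]
      exact ⟨by linarith [hY0.2], by linarith [hY0.1]⟩
    have hZt : Filter.Tendsto Z Filter.atTop (nhds ν) := tendsto_ode ha hν hZ hZ0
    have : Filter.Tendsto (fun τ => -Z (-τ)) Filter.atBot (nhds (-ν)) :=
      (hZt.comp Filter.tendsto_neg_atBot_atTop).neg
    convert this using 1
    funext τ; simp [hZdef]
  have hinner : ∀ τ : ℝ, ⟪q, Y τ • q⟫ = Y τ := by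
    intro τ
    rw [real_inner_smul_right, real_inner_self_eq_norm_sq, hq]
    ring
  refine ⟨htop, hbot, fun τ => by rw [hinner τ]; abel, fun τ => ?_⟩
  have := (hY τ).smul_const q
  refine this.congr_deriv ?_
  rw [hcrit, hinner τ]
  match_scalars
  ring
end
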